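/- arXiv:1003.3382 — 6 statements merged into one kernel-verified Lean document; each statement's English description precedes it below -/
import Mathlib

section
/- Let B be a left Banach A-module. Then B*A ⊆ wap_ℓ(B) if and only if AA** ⊆ Z_{B**}(A**), where AA** = {a·a'' : a ∈ A, a'' ∈ A**} with the product taken in the first Arens sense. -/
open Filter Topology

/-- `arensHalf m y''` is the map `z' ↦ m**(y'', z')`, where
`⟨m*(z', x), y⟩ = ⟨z', m(x,y)⟩` and `⟨m**(y'', z'), x⟩ = ⟨y'', m*(z', x)⟩`. -/
noncomputable def arensHalf {X Y Z : Type*} [NormedAddCommGroup X] [NormedSpace ℝ X]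
    [NormedAddCommGroup Y] [NormedSpace ℝ Y] [NormedAddCommGroup Z] [NormedSpace ℝ Z]
    (m : X →L[ℝ] Y →L[ℝ] Z) (y'' : (Y →L[ℝ] ℝ) →L[ℝ] ℝ) :
    (Z →L[ℝ] ℝ) →L[ℝ] (X →L[ℝ] ℝ) :=
  (ContinuousLinearMap.compL ℝ X (Y →L[ℝ] ℝ) ℝ y'').comp
    (((ContinuousLinearMap.compL ℝ X (Y →L[ℝ] Z) (Y →L[ℝ] ℝ)).flip m).comp
      (ContinuousLinearMap.compL ℝ Y Z ℝ))

/-- The first Arens extension `m*** : X** × Y** → Z**` of a bounded bilinear map `m`,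
defined by `⟨m***(x'', y''), z'⟩ = ⟨x'', m**(y'', z')⟩`. -/
noncomputable def arens {X Y Z : Type*} [NormedAddCommGroup X] [NormedSpace ℝ X]
    [NormedAddCommGroup Y] [NormedSpace ℝ Y] [NormedAddCommGroup Z] [NormedSpace ℝ Z]
    (m : X →L[ℝ] Y →L[ℝ] Z) (x'' : (X →L[ℝ] ℝ) →L[ℝ] ℝ) (y'' : (Y →L[ℝ] ℝ) →L[ℝ] ℝ) :
    (Z →L[ℝ] ℝ) →L[ℝ] ℝ :=
  x''.comp (arensHalf m y'')

/-- Canonical embedding of a normed space into its double dual. -/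
noncomputable def incl {X : Type*} [NormedAddCommGroup X] [NormedSpace ℝ X] (x : X) :
    (X →L[ℝ] ℝ) →L[ℝ] ℝ :=
  ContinuousLinearMap.apply ℝ ℝ x

/-- `f : E** → F**` is weak*-to-weak* continuous. -/
def WWCont {E F : Type*} [NormedAddCommGroup E] [NormedSpace ℝ E]
    [NormedAddCommGroup F] [NormedSpace ℝ F]
    (f : ((E →L[ℝ] ℝ) →L[ℝ] ℝ) → ((F →L[ℝ] ℝ) →L[ℝ] ℝ)) : Prop :=
  ∀ (l : Filter ((E →L[ℝ] ℝ) →L[ℝ] ℝ)) (u : (E →L[ℝ] ℝ) →L[ℝ] ℝ),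
    (∀ φ : E →L[ℝ] ℝ, Filter.Tendsto (fun v => v φ) l (nhds (u φ))) →
    ∀ ψ : F →L[ℝ] ℝ, Filter.Tendsto (fun v => f v ψ) l (nhds (f u ψ))

/-!
Write `c'' = a·a''`. Since `π` is an action, `⟨π***(a'', b''), b'·a⟩ = ⟨π***(c'', b''), b'⟩`
and likewise for `π^{t***t}`, so the left-hand side says exactly that every such `c''` lies in
the topological centre, i.e. `π***(c'', b'') = π^{t***t}(c'', b'')` for all `b''`.
The map `b'' ↦ π^{t***t}(c'', b'')` is always weak*-continuous, and `π***(c'', ·)` agrees with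
it on `B`; as `B` is weak*-dense in `B**` (Helly's lemma), `π***(c'', ·)` is weak*-continuous
if and only if the two maps agree everywhere.
-/

section Helly

variable {B : Type*} [NormedAddCommGroup B] [NormedSpace ℝ B]

theorem exists_apply_eq_dualDual_of_finset (b'' : (B →L[ℝ] ℝ) →L[ℝ] ℝ)
    (s : Finset (B →L[ℝ] ℝ)) : ∃ b : B, ∀ φ ∈ s, φ b = b'' φ := by
  classical
  let T : B →ₗ[ℝ] (s → ℝ) := LinearMap.pi fun φ => (φ.1 : B →ₗ[ℝ] ℝ)
  suffices hy : (fun φ : s => b'' φ) ∈ LinearMap.range T by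
    obtain ⟨b, hb⟩ := hy
    exact ⟨b, fun φ hφ => congrFun hb ⟨φ, hφ⟩⟩
  rw [← Subspace.forall_mem_dualAnnihilator_apply_eq_zero_iff]
  intro f hf
  -- `f` is `g ↦ ∑ cᵢ gᵢ`; it kills the range of `T` iff `∑ cᵢ φᵢ = 0`, and then `b''` kills it too.
  let c : s → ℝ := fun i => f fun j => if i = j then 1 else 0
  have hf_apply (g : s → ℝ) : f g = ∑ i, c i * g i := by
    rw [LinearMap.pi_apply_eq_sum_univ f g]
    exact Finset.sum_congr rfl fun i _ => mul_comm _ _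
  have hcomb : ∑ i : s, c i • (i.1 : B →L[ℝ] ℝ) = 0 := by
    ext b
    have hfb : f (T b) = 0 := (Submodule.mem_dualAnnihilator f).mp hf (T b) ⟨b, rfl⟩
    simpa [hf_apply, T] using hfb
  simpa [hf_apply] using congrArg b'' hcomb

theorem exists_neBot_tendsto_dualDual (b'' : (B →L[ℝ] ℝ) →L[ℝ] ℝ) :
    ∃ l : Filter B, l.NeBot ∧ ∀ φ : B →L[ℝ] ℝ, Tendsto (fun b => φ b) l (𝓝 (b'' φ)) := by
  let j : B → (B →L[ℝ] ℝ) → ℝ := fun b φ => φ b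
  refine ⟨comap j (𝓝 fun φ => b'' φ), ?_, fun φ =>
    ((continuous_apply φ).tendsto _).comp (tendsto_comap (f := j))⟩
  rw [comap_neBot_iff]
  intro t ht
  rw [nhds_pi, mem_pi] at ht
  obtain ⟨I, hI, V, hV, hVt⟩ := ht
  obtain ⟨b, hb⟩ := exists_apply_eq_dualDual_of_finset b'' hI.toFinset
  refine ⟨b, hVt fun φ hφ => ?_⟩
  change φ b ∈ V φ
  simpa only [hb φ (hI.mem_toFinset.mpr hφ)] using mem_of_mem_nhds (hV φ)

end Helly

section TopologicalCentre

variable {A B : Type*} [NormedAddCommGroup A] [NormedSpace ℝ A]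
  [NormedAddCommGroup B] [NormedSpace ℝ B]

theorem arens_incl_apply (π : A →L[ℝ] B →L[ℝ] B) (c'' : (A →L[ℝ] ℝ) →L[ℝ] ℝ) (b : B)
    (ψ : B →L[ℝ] ℝ) : arens π c'' (incl b) ψ = arensHalf π.flip c'' ψ b :=
  rfl

theorem arens_flip_apply (π : A →L[ℝ] B →L[ℝ] B) (c'' : (A →L[ℝ] ℝ) →L[ℝ] ℝ)
    (b'' : (B →L[ℝ] ℝ) →L[ℝ] ℝ) (ψ : B →L[ℝ] ℝ) :
    arens π.flip b'' c'' ψ = b'' (arensHalf π.flip c'' ψ) :=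
  rfl

theorem wwCont_arens_iff (π : A →L[ℝ] B →L[ℝ] B) (c'' : (A →L[ℝ] ℝ) →L[ℝ] ℝ) :
    WWCont (arens π c'') ↔
      ∀ b'' : (B →L[ℝ] ℝ) →L[ℝ] ℝ, arens π c'' b'' = arens π.flip b'' c'' := by
  constructor
  · intro hcont b''
    ext ψ
    obtain ⟨l, hl, htendsto⟩ := exists_neBot_tendsto_dualDual b''
    have hincl : ∀ φ, Tendsto (fun v : (B →L[ℝ] ℝ) →L[ℝ] ℝ => v φ) (l.map incl) (𝓝 (b'' φ)) :=
      fun φ => tendsto_map'_iff.mpr (htendsto φ)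
    have hlim := tendsto_map'_iff.mp (hcont _ b'' hincl ψ)
    simp only [Function.comp_def, arens_incl_apply] at hlim
    exact tendsto_nhds_unique hlim (htendsto _)
  · intro hcentre l u hu ψ
    simp only [hcentre, arens_flip_apply]
    exact hu _

end TopologicalCentre

section ModuleAction

variable {A B : Type*} [NonUnitalNormedRing A] [NormedSpace ℝ A] [IsScalarTower ℝ A A]
  [SMulCommClass ℝ A A] [NormedAddCommGroup B] [NormedSpace ℝ B]
  {π : A →L[ℝ] B →L[ℝ] B}

theorem arens_apply_comp_eq_arens_mul (hπ : ∀ (a₁ a₂ : A) (b : B), π (a₁ * a₂) b = π a₁ (π a₂ b))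
    (b' : B →L[ℝ] ℝ) (a : A) (a'' : (A →L[ℝ] ℝ) →L[ℝ] ℝ) (b'' : (B →L[ℝ] ℝ) →L[ℝ] ℝ) :
    arens π a'' b'' (b'.comp (π a))
      = arens π (arens (ContinuousLinearMap.mul ℝ A) (incl a) a'') b'' b' := by
  refine congrArg a'' (ContinuousLinearMap.ext fun x => congrArg b'' ?_)
  ext b
  exact congrArg b' (hπ a x b).symm

theorem arens_flip_apply_comp_eq_arens_mul
    (hπ : ∀ (a₁ a₂ : A) (b : B), π (a₁ * a₂) b = π a₁ (π a₂ b))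
    (b' : B →L[ℝ] ℝ) (a : A) (a'' : (A →L[ℝ] ℝ) →L[ℝ] ℝ) (b'' : (B →L[ℝ] ℝ) →L[ℝ] ℝ) :
    arens π.flip b'' a'' (b'.comp (π a))
      = arens π.flip b'' (arens (ContinuousLinearMap.mul ℝ A) (incl a) a'') b' := by
  refine congrArg b'' (ContinuousLinearMap.ext fun b => congrArg a'' ?_)
  ext x
  exact congrArg b' (hπ a x b).symm

end ModuleAction

theorem wapl_iff_AAddstar_subset_center_general {A B : Type*}
    [NonUnitalNormedRing A] [NormedSpace ℝ A] [IsScalarTower ℝ A A] [SMulCommClass ℝ A A]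
    [NormedAddCommGroup B] [NormedSpace ℝ B]
    (π : A →L[ℝ] B →L[ℝ] B) (hπ : ∀ (a₁ a₂ : A) (b : B), π (a₁ * a₂) b = π a₁ (π a₂ b)) :
    (∀ (b' : B →L[ℝ] ℝ) (a : A) (a'' : (A →L[ℝ] ℝ) →L[ℝ] ℝ) (b'' : (B →L[ℝ] ℝ) →L[ℝ] ℝ),
        arens π a'' b'' (b'.comp (π a)) = arens π.flip b'' a'' (b'.comp (π a))) ↔
      (∀ (a : A) (a'' : (A →L[ℝ] ℝ) →L[ℝ] ℝ),
        WWCont (fun b'' : (B →L[ℝ] ℝ) →L[ℝ] ℝ =>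
          arens π (arens (ContinuousLinearMap.mul ℝ A) (incl a) a'') b'')) := by
  simp only [wwCont_arens_iff, ContinuousLinearMap.ext_iff, arens_apply_comp_eq_arens_mul hπ,
    arens_flip_apply_comp_eq_arens_mul hπ]
  exact ⟨fun h a a'' b'' b' => h b' a a'' b'', fun h b' a a'' b'' => h a a'' b'' b'⟩

/-- for a left Banach `A`-module `B`, `B*A ⊆ wap_ℓ(B)` iff
`AA** ⊆ Z_{B**}(A**)` (products in the first Arens sense). -/
theorem wapl_iff_AAddstar_subset_center {A B : Type*}
    [NonUnitalNormedRing A] [NormedSpace ℝ A] [IsScalarTower ℝ A A] [SMulCommClass ℝ A A]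
    [CompleteSpace A] [NormedAddCommGroup B] [NormedSpace ℝ B] [CompleteSpace B]
    (π : A →L[ℝ] B →L[ℝ] B) (hπ : ∀ (a₁ a₂ : A) (b : B), π (a₁ * a₂) b = π a₁ (π a₂ b)) :
    (∀ (b' : B →L[ℝ] ℝ) (a : A) (a'' : (A →L[ℝ] ℝ) →L[ℝ] ℝ) (b'' : (B →L[ℝ] ℝ) →L[ℝ] ℝ),
        arens π a'' b'' (b'.comp (π a)) = arens π.flip b'' a'' (b'.comp (π a))) ↔
      (∀ (a : A) (a'' : (A →L[ℝ] ℝ) →L[ℝ] ℝ),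
        WWCont (fun b'' : (B →L[ℝ] ℝ) →L[ℝ] ℝ =>
          arens π (arens (ContinuousLinearMap.mul ℝ A) (incl a) a'') b'')) :=
  wapl_iff_AAddstar_subset_center_general π hπ
end

section
/- Let B be a left Banach A-module and b' ∈ B*. Then b' ∈ wap_ℓ(B) if and only if the adjoint map T* : B** → A* of T : A → B*, Ta = π_ℓ*(b', a), is weak*-to-weak continuous, that is, b''_α →^{w*} b'' in B** implies ⟨a'', T*b''_α⟩ → ⟨a'', T*b''⟩ for all a'' ∈ A**. -/
open Filter Topology

/-- Any element of the double dual agrees with the evaluation at some point of `B`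
on any finite set of functionals. -/
lemma exists_agree {B : Type*} [NormedAddCommGroup B] [NormedSpace ℝ B]
    (b'' : (B →L[ℝ] ℝ) →L[ℝ] ℝ) (F : Finset (B →L[ℝ] ℝ)) :
    ∃ b : B, ∀ φ ∈ F, φ b = b'' φ := by
  classical
  let L : B →ₗ[ℝ] EuclideanSpace ℝ F :=
    { toFun := fun b => WithLp.toLp 2 (fun φ => (φ : B →L[ℝ] ℝ) b)
      map_add' := by intro x y; ext φ; simp
      map_smul' := by intro c x; ext φ; simp }
  let t : EuclideanSpace ℝ F := WithLp.toLp 2 (fun φ => b'' φ)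
  have ht : t ∈ LinearMap.range L := by
    rw [← Submodule.orthogonal_orthogonal (LinearMap.range L)]
    rw [Submodule.mem_orthogonal]
    intro y hy
    have hζ : (∑ φ : F, y φ • (φ : B →L[ℝ] ℝ)) = 0 := by
      ext b
      have h0 := (Submodule.mem_orthogonal _ y).1 hy (L b) ⟨b, rfl⟩
      simpa [PiLp.inner_apply, L, ContinuousLinearMap.sum_apply, mul_comm] using h0
    have h1 : b'' (∑ φ : F, y φ • (φ : B →L[ℝ] ℝ)) = 0 := by rw [hζ]; simp
    rw [map_sum] at h1
    simpa [PiLp.inner_apply, t, mul_comm] using h1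
  obtain ⟨b, hb⟩ := ht
  exact ⟨b, fun φ hφ => congrArg (fun z : EuclideanSpace ℝ F => z ⟨φ, hφ⟩) hb⟩

/-- `b' ∈ wap_ℓ(B)` iff the adjoint of `T : A → B*`, `Ta = π_ℓ*(b', a)`,
is weak*-to-weak continuous from `B**` to `A*`. -/
theorem mem_wapl_iff_adjoint_wstar_weak_continuous {A B : Type*}
    [NonUnitalNormedRing A] [NormedSpace ℝ A] [IsScalarTower ℝ A A] [SMulCommClass ℝ A A]
    [CompleteSpace A] [NormedAddCommGroup B] [NormedSpace ℝ B] [CompleteSpace B]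
    (π : A →L[ℝ] B →L[ℝ] B) (hπ : ∀ (a₁ a₂ : A) (b : B), π (a₁ * a₂) b = π a₁ (π a₂ b))
    (b' : B →L[ℝ] ℝ) :
    (∀ (a'' : (A →L[ℝ] ℝ) →L[ℝ] ℝ) (b'' : (B →L[ℝ] ℝ) →L[ℝ] ℝ),
        arens π a'' b'' b' = arens π.flip b'' a'' b') ↔
      (∀ (l : Filter ((B →L[ℝ] ℝ) →L[ℝ] ℝ)) (u : (B →L[ℝ] ℝ) →L[ℝ] ℝ),
        (∀ g : B →L[ℝ] ℝ, Filter.Tendsto (fun v => v g) l (nhds (u g))) →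
        ∀ a'' : (A →L[ℝ] ℝ) →L[ℝ] ℝ,
          Filter.Tendsto
            (fun v : (B →L[ℝ] ℝ) →L[ℝ] ℝ =>
              a'' (v.comp ((ContinuousLinearMap.compL ℝ B B ℝ b').comp π)))
            l (nhds (a'' (u.comp ((ContinuousLinearMap.compL ℝ B B ℝ b').comp π))))) := by
  constructor
  · intro h l u hl a''
    have key : ∀ v : (B →L[ℝ] ℝ) →L[ℝ] ℝ,
        a'' (v.comp ((ContinuousLinearMap.compL ℝ B B ℝ b').comp π))
          = v (arensHalf π.flip a'' b') := by
      intro v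
      have h1 : v.comp ((ContinuousLinearMap.compL ℝ B B ℝ b').comp π)
          = arensHalf π v b' := by ext a; rfl
      rw [h1]
      exact h a'' v
    simp only [key]
    exact hl _
  · intro h a'' b''
    classical
    choose bF hbF using fun F => exists_agree b'' F
    set l : Filter ((B →L[ℝ] ℝ) →L[ℝ] ℝ) :=
      Filter.map (fun F => incl (bF F)) Filter.atTop with hldef
    have hl : ∀ g : B →L[ℝ] ℝ, Filter.Tendsto (fun v => v g) l (nhds (b'' g)) := by
      intro g
      rw [hldef, Filter.tendsto_map'_iff]
      apply Tendsto.congr' _ tendsto_const_nhds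
      filter_upwards [Filter.eventually_ge_atTop ({g} : Finset (B →L[ℝ] ℝ))] with F hF
      exact (hbF F g (hF (Finset.mem_singleton_self g))).symm
    have h2 := h l b'' hl a''
    have h3 := hl (arensHalf π.flip a'' b')
    have hfeq : (fun v : (B →L[ℝ] ℝ) →L[ℝ] ℝ =>
          a'' (v.comp ((ContinuousLinearMap.compL ℝ B B ℝ b').comp π)))
          ∘ (fun F => incl (bF F))
        = (fun v : (B →L[ℝ] ℝ) →L[ℝ] ℝ => v (arensHalf π.flip a'' b'))
          ∘ (fun F => incl (bF F)) := by
      funext F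
      show a'' ((incl (bF F)).comp ((ContinuousLinearMap.compL ℝ B B ℝ b').comp π))
          = a'' (b'.comp (π.flip (bF F)))
      congr 1
    rw [hldef, Filter.tendsto_map'_iff] at h2 h3
    rw [hfeq] at h2
    have := tendsto_nhds_unique h2 h3
    have hbt : b''.comp ((ContinuousLinearMap.compL ℝ B B ℝ b').comp π)
        = arensHalf π b'' b' := by ext a; rfl
    calc arens π a'' b'' b'
        = a'' (b''.comp ((ContinuousLinearMap.compL ℝ B B ℝ b').comp π)) := by
          rw [hbt]; rfl
      _ = b'' (arensHalf π.flip a'' b') := this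
      _ = arens π.flip b'' a'' b' := rfl
end

section
/- Let A be a Banach algebra and a' ∈ A*. Then a' ∈ wap(A) if and only if the adjoint of the operator T_{a'} : A → A*, T_{a'}(a) = a'a, is weak*-to-weak continuous from A** to A*. Consequently, A is Arens regular if and only if the adjoint of T_{a'} is weak*-to-weak continuous for every a' ∈ A*. -/
/-!
If `T : A → A*` is `a ↦ a'a` and `Tᵗ b = b a'` is its transpose, then
`⟨a'' b'', a'⟩ = ⟨a'', T* b''⟩` and `⟨a'' ∘ b'', a'⟩ = ⟨b'', (Tᵗ)* a''⟩`. So `a' ∈ wap(A)` says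
`⟨a'', T* b''⟩ = ⟨b'', (Tᵗ)* a''⟩` for all `a''`, `b''`, and this identity makes
`b'' ↦ ⟨a'', T* b''⟩` weak* continuous, being evaluation at `(Tᵗ)* a'' ∈ A*`. Conversely, the
identity holds trivially when `b''` is a point of `A`; these points are weak* dense in `A**` (by
the finite-dimensional Helly lemma), so weak*-to-weak continuity of `T*` extends it to all `b''`.
-/

open Filter Topology

namespace ContinuousLinearMap

section Helly

variable {𝕜 X : Type*} [Field 𝕜] [TopologicalSpace 𝕜] [IsTopologicalRing 𝕜]
  [AddCommGroup X] [TopologicalSpace X] [Module 𝕜 X]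

theorem exists_forall_apply_eq_of_finiteDimensional (W : Submodule 𝕜 (X →L[𝕜] 𝕜))
    [FiniteDimensional 𝕜 W] (φ : Module.Dual 𝕜 W) :
    ∃ x : X, ∀ w : W, (w : X →L[𝕜] 𝕜) x = φ w := by
  let B : W →ₗ[𝕜] X →ₗ[𝕜] 𝕜 := (coeLM 𝕜).comp W.subtype
  have hB : Function.Injective B := fun w₁ w₂ h => Subtype.ext (coe_injective h)
  obtain ⟨x, hx⟩ := (LinearMap.flip_surjective_iff₁ (V₁ := W) (B := B)).mpr hB φ
  exact ⟨x, fun w => LinearMap.congr_fun hx w⟩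

theorem exists_neBot_tendsto_apply (φ : Module.Dual 𝕜 (X →L[𝕜] 𝕜)) :
    ∃ l : Filter X, l.NeBot ∧ ∀ g : X →L[𝕜] 𝕜, Tendsto g l (𝓝 (φ g)) := by
  have hx (G : Finset (X →L[𝕜] 𝕜)) : ∃ x : X, ∀ g ∈ G, g x = φ g := by
    obtain ⟨x, hx⟩ := exists_forall_apply_eq_of_finiteDimensional
      (Submodule.span 𝕜 (G : Set (X →L[𝕜] 𝕜))) (φ.domRestrict _)
    exact ⟨x, fun g hg => hx ⟨g, Submodule.subset_span hg⟩⟩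
  choose x hx using hx
  refine ⟨map x atTop, inferInstance, fun g => ?_⟩
  rw [tendsto_map'_iff]
  refine tendsto_const_nhds.congr' ?_
  filter_upwards [eventually_ge_atTop {g}] with G hG
  exact (hx G g (hG (Finset.mem_singleton_self g))).symm

end Helly

section Adjoint

variable {𝕜 X Y : Type*} [NontriviallyNormedField 𝕜] [SeminormedAddCommGroup X]
  [NormedSpace 𝕜 X] [SeminormedAddCommGroup Y] [NormedSpace 𝕜 Y]

/-- The adjoint `v ↦ v ∘ T` of `T : X → Y*` is weak*-to-weak continuous `Y** → X*`, with nets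
encoded as filters: weak* convergence in `Y**` is tested against `Y*`, weak convergence in `X*`
against `X**`. -/
def HasWeakStarWeakContinuousAdjoint (T : X →L[𝕜] Y →L[𝕜] 𝕜) : Prop :=
  ∀ (l : Filter ((Y →L[𝕜] 𝕜) →L[𝕜] 𝕜)) (u : (Y →L[𝕜] 𝕜) →L[𝕜] 𝕜),
    (∀ g : Y →L[𝕜] 𝕜, Tendsto (fun v => v g) l (𝓝 (u g))) →
    ∀ F : (X →L[𝕜] 𝕜) →L[𝕜] 𝕜, Tendsto (fun v => F (v.comp T)) l (𝓝 (F (u.comp T)))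

theorem hasWeakStarWeakContinuousAdjoint_iff (T : X →L[𝕜] Y →L[𝕜] 𝕜) :
    HasWeakStarWeakContinuousAdjoint T ↔
      ∀ (F : (X →L[𝕜] 𝕜) →L[𝕜] 𝕜) (v : (Y →L[𝕜] 𝕜) →L[𝕜] 𝕜), F (v.comp T) = v (F.comp T.flip) := by
  constructor
  · intro hT F v
    obtain ⟨l, hl, hlim⟩ := exists_neBot_tendsto_apply (v : Module.Dual 𝕜 (Y →L[𝕜] 𝕜))
    have hι : ∀ g, Tendsto (fun w => w g) (map (NormedSpace.inclusionInDoubleDual 𝕜 Y) l)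
        (𝓝 (v g)) := fun g => tendsto_map'_iff.mpr (hlim g)
    have hF := tendsto_map'_iff.mp (hT _ v hι F)
    -- `F ((ι y).comp T)` and `(F.comp T.flip) y` agree definitionally, so `hF` and `hlim` are
    -- limits of one function along the nontrivial filter `l`
    exact tendsto_nhds_unique hF (hlim (F.comp T.flip))
  · intro hT l u hu F
    simp only [hT]
    exact hu (F.comp T.flip)

end Adjoint

end ContinuousLinearMap

section Arens

variable {X Y Z : Type*} [NormedAddCommGroup X] [NormedSpace ℝ X]
  [NormedAddCommGroup Y] [NormedSpace ℝ Y] [NormedAddCommGroup Z] [NormedSpace ℝ Z]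

theorem arens_apply (m : X →L[ℝ] Y →L[ℝ] Z) (x'' : (X →L[ℝ] ℝ) →L[ℝ] ℝ)
    (y'' : (Y →L[ℝ] ℝ) →L[ℝ] ℝ) (z' : Z →L[ℝ] ℝ) :
    arens m x'' y'' z' = x'' (y''.comp ((ContinuousLinearMap.compL ℝ Y Z ℝ z').comp m)) :=
  rfl

theorem ContinuousLinearMap.compL_comp_flip (m : X →L[ℝ] Y →L[ℝ] Z) (z' : Z →L[ℝ] ℝ) :
    (ContinuousLinearMap.compL ℝ X Z ℝ z').comp m.flip =
      ((ContinuousLinearMap.compL ℝ Y Z ℝ z').comp m).flip :=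
  rfl

theorem arens_apply_eq_arens_flip_apply_iff (m : X →L[ℝ] Y →L[ℝ] Z) (z' : Z →L[ℝ] ℝ) :
    (∀ x'' y'', arens m x'' y'' z' = arens m.flip y'' x'' z') ↔
      ((ContinuousLinearMap.compL ℝ Y Z ℝ z').comp m).HasWeakStarWeakContinuousAdjoint := by
  simp only [arens_apply, ContinuousLinearMap.compL_comp_flip]
  exact (ContinuousLinearMap.hasWeakStarWeakContinuousAdjoint_iff _).symm

end Arens

theorem mem_wap_iff_adjoint_wstar_weak_continuous_general {A : Type*}
    [NonUnitalNormedRing A] [NormedSpace ℝ A] [IsScalarTower ℝ A A] [SMulCommClass ℝ A A] :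
    (∀ a' : A →L[ℝ] ℝ,
      ((∀ (a'' b'' : (A →L[ℝ] ℝ) →L[ℝ] ℝ),
          arens (ContinuousLinearMap.mul ℝ A) a'' b'' a' =
            arens (ContinuousLinearMap.mul ℝ A).flip b'' a'' a') ↔
        (∀ (l : Filter ((A →L[ℝ] ℝ) →L[ℝ] ℝ)) (u : (A →L[ℝ] ℝ) →L[ℝ] ℝ),
          (∀ g : A →L[ℝ] ℝ, Filter.Tendsto (fun v => v g) l (nhds (u g))) →
          ∀ F : (A →L[ℝ] ℝ) →L[ℝ] ℝ,
            Filter.Tendsto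
              (fun v : (A →L[ℝ] ℝ) →L[ℝ] ℝ =>
                F (v.comp ((ContinuousLinearMap.compL ℝ A A ℝ a').comp
                  (ContinuousLinearMap.mul ℝ A))))
              l (nhds (F (u.comp ((ContinuousLinearMap.compL ℝ A A ℝ a').comp
                  (ContinuousLinearMap.mul ℝ A)))))))) ∧
    ((∀ a'' b'' : (A →L[ℝ] ℝ) →L[ℝ] ℝ,
        arens (ContinuousLinearMap.mul ℝ A) a'' b'' =
          arens (ContinuousLinearMap.mul ℝ A).flip b'' a'') ↔
      (∀ a' : A →L[ℝ] ℝ,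
        ∀ (l : Filter ((A →L[ℝ] ℝ) →L[ℝ] ℝ)) (u : (A →L[ℝ] ℝ) →L[ℝ] ℝ),
          (∀ g : A →L[ℝ] ℝ, Filter.Tendsto (fun v => v g) l (nhds (u g))) →
          ∀ F : (A →L[ℝ] ℝ) →L[ℝ] ℝ,
            Filter.Tendsto
              (fun v : (A →L[ℝ] ℝ) →L[ℝ] ℝ =>
                F (v.comp ((ContinuousLinearMap.compL ℝ A A ℝ a').comp
                  (ContinuousLinearMap.mul ℝ A))))
              l (nhds (F (u.comp ((ContinuousLinearMap.compL ℝ A A ℝ a').comp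
                  (ContinuousLinearMap.mul ℝ A))))))) := by
  have wap_iff (a' : A →L[ℝ] ℝ) :=
    arens_apply_eq_arens_flip_apply_iff (ContinuousLinearMap.mul ℝ A) a'
  refine ⟨wap_iff, fun hA a' => (wap_iff a').mp fun a'' b'' => ?_, fun hT a'' b'' => ?_⟩
  · exact DFunLike.congr_fun (hA a'' b'') a'
  · exact ContinuousLinearMap.ext fun a' => (wap_iff a').mpr (hT a') a'' b''

/-- `a' ∈ wap(A)` iff the adjoint of `T_{a'} : A → A*`, `T_{a'}a = a'a`,
is weak*-to-weak continuous; consequently `A` is Arens regular iff this holds for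
every `a' ∈ A*`. -/
theorem mem_wap_iff_adjoint_wstar_weak_continuous {A : Type*}
    [NonUnitalNormedRing A] [NormedSpace ℝ A] [IsScalarTower ℝ A A] [SMulCommClass ℝ A A]
    [CompleteSpace A] :
    (∀ a' : A →L[ℝ] ℝ,
      ((∀ (a'' b'' : (A →L[ℝ] ℝ) →L[ℝ] ℝ),
          arens (ContinuousLinearMap.mul ℝ A) a'' b'' a' =
            arens (ContinuousLinearMap.mul ℝ A).flip b'' a'' a') ↔
        (∀ (l : Filter ((A →L[ℝ] ℝ) →L[ℝ] ℝ)) (u : (A →L[ℝ] ℝ) →L[ℝ] ℝ),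
          (∀ g : A →L[ℝ] ℝ, Filter.Tendsto (fun v => v g) l (nhds (u g))) →
          ∀ F : (A →L[ℝ] ℝ) →L[ℝ] ℝ,
            Filter.Tendsto
              (fun v : (A →L[ℝ] ℝ) →L[ℝ] ℝ =>
                F (v.comp ((ContinuousLinearMap.compL ℝ A A ℝ a').comp
                  (ContinuousLinearMap.mul ℝ A))))
              l (nhds (F (u.comp ((ContinuousLinearMap.compL ℝ A A ℝ a').comp
                  (ContinuousLinearMap.mul ℝ A)))))))) ∧
    ((∀ a'' b'' : (A →L[ℝ] ℝ) →L[ℝ] ℝ,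
        arens (ContinuousLinearMap.mul ℝ A) a'' b'' =
          arens (ContinuousLinearMap.mul ℝ A).flip b'' a'') ↔
      (∀ a' : A →L[ℝ] ℝ,
        ∀ (l : Filter ((A →L[ℝ] ℝ) →L[ℝ] ℝ)) (u : (A →L[ℝ] ℝ) →L[ℝ] ℝ),
          (∀ g : A →L[ℝ] ℝ, Filter.Tendsto (fun v => v g) l (nhds (u g))) →
          ∀ F : (A →L[ℝ] ℝ) →L[ℝ] ℝ,
            Filter.Tendsto
              (fun v : (A →L[ℝ] ℝ) →L[ℝ] ℝ =>
                F (v.comp ((ContinuousLinearMap.compL ℝ A A ℝ a').comp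
                  (ContinuousLinearMap.mul ℝ A))))
              l (nhds (F (u.comp ((ContinuousLinearMap.compL ℝ A A ℝ a').comp
                  (ContinuousLinearMap.mul ℝ A))))))) :=
  mem_wap_iff_adjoint_wstar_weak_continuous_general
end

section
/- Let B be a Banach A-bimodule. If there exists a₀ ∈ A such that A** = a₀A** (product in the first Arens sense) and a₀ has the Rw*w-property, then Z_{B**}(A**) = A**. -/
open Filter Topology

/-!
The Rw*w-property of `a₀` makes `S = (a₀ * ·)` weakly compact: `S**` maps `A**` into `A`.
Otherwise separate `a'' = S** x''` from `A` by some `Φ ∈ A***` vanishing on `A`, and apply Helly's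
lemma alternately to `Φ` and to `x''` to build bounded `fₙ ∈ A*`, `bₘ ∈ A` with
`fₙ (a₀ bₘ) = Φ a''` for `n ≤ m` and `= 0` for `m < n`. If `g` and `F` are the weak* limits of
`fₙ` and `bₘ` along a free ultrafilter, then `(fₙ - g) a₀ → 0` weak*, while
`F ((fₙ - g) a₀) = Φ a'' ≠ 0` for every `n`. Hence `A** = a₀ A** ⊆ A`, and the first Arens
product with an element of `A` is weak*-continuous.
-/

section ArensIncl

variable {X Y Z : Type*} [NormedAddCommGroup X] [NormedSpace ℝ X]
  [NormedAddCommGroup Y] [NormedSpace ℝ Y] [NormedAddCommGroup Z] [NormedSpace ℝ Z]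

lemma arens_incl_apply_s9 (m : X →L[ℝ] Y →L[ℝ] Z) (x : X) (y'' : (Y →L[ℝ] ℝ) →L[ℝ] ℝ)
    (z' : Z →L[ℝ] ℝ) : arens m (incl x) y'' z' = y'' (z'.comp (m x)) := rfl

lemma wwCont_arens_incl (m : X →L[ℝ] Y →L[ℝ] Z) (x : X) :
    WWCont fun y'' => arens m (incl x) y'' :=
  fun _ _ hu z' => by simpa only [arens_incl_apply_s9] using hu (z'.comp (m x))

end ArensIncl

section Duality

variable {X : Type*} [NormedAddCommGroup X] [NormedSpace ℝ X]

lemma exists_dual_eq_zero_of_notMem {p : Submodule ℝ X} [IsClosed (p : Set X)] {x : X}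
    (hx : x ∉ p) : ∃ Φ : X →L[ℝ] ℝ, (∀ y ∈ p, Φ y = 0) ∧ Φ x ≠ 0 := by
  obtain ⟨θ, -, hθ⟩ := exists_dual_vector'' ℝ (Submodule.Quotient.mk x : X ⧸ p)
  refine ⟨θ.comp p.mkQL, fun y hy => ?_, ?_⟩
  · simp [(Submodule.Quotient.mk_eq_zero p).2 hy]
  · simpa [hθ] using (QuotientAddGroup.norm_mk_eq_zero (S := p.toAddSubgroup)).not.2 hx

/-- Helly's lemma. -/
lemma exists_forall_apply_eq_and_norm_le (x'' : (X →L[ℝ] ℝ) →L[ℝ] ℝ)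
    {s : Set (X →L[ℝ] ℝ)} (hs : s.Finite) {ε : ℝ} (hε : 0 < ε) :
    ∃ x : X, (∀ g ∈ s, g x = x'' g) ∧ ‖x‖ ≤ ‖x''‖ + ε := by
  have := hs.to_subtype
  set T : X →L[ℝ] (s → ℝ) := ContinuousLinearMap.pi fun g => (g : X →L[ℝ] ℝ)
  set W : Submodule ℝ X := LinearMap.ker (T : X →ₗ[ℝ] s → ℝ)
  have : IsClosed (W : Set X) := T.isClosed_ker
  have : FiniteDimensional ℝ (X ⧸ W) := (LinearMap.quotKerEquivRange _).symm.finiteDimensional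
  -- `X ⧸ W` is finite-dimensional, hence reflexive: `x''` induces an element `z` of it.
  set ψ : Module.Dual ℝ (Module.Dual ℝ (X ⧸ W)) := x''.toLinearMap ∘ₗ
    (((ContinuousLinearMap.compL ℝ X (X ⧸ W) ℝ).flip W.mkQL).toLinearMap ∘ₗ
      LinearMap.toContinuousLinearMap.toLinearMap)
  set z := (Module.evalEquiv ℝ (X ⧸ W)).symm ψ
  have hz : ∀ ξ : X ⧸ W →L[ℝ] ℝ, ξ z = x'' (ξ.comp W.mkQL) := fun ξ =>
    (Module.apply_evalEquiv_symm_apply ℝ (X ⧸ W) ξ.toLinearMap ψ).trans (by simp [ψ]; rfl)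
  have hz_norm : ‖z‖ ≤ ‖x''‖ := by
    refine NormedSpace.norm_le_dual_bound ℝ z (norm_nonneg x'') fun ξ => ?_
    rw [hz]
    refine (x''.le_opNorm _).trans (mul_le_mul_of_nonneg_left ?_ (norm_nonneg _))
    refine (ξ.comp W.mkQL).opNorm_le_bound (norm_nonneg ξ) fun y => ?_
    exact (ξ.le_opNorm _).trans
      (mul_le_mul_of_nonneg_left (Submodule.Quotient.norm_mk_le W y) (norm_nonneg _))
  obtain ⟨x, hxz, hx⟩ := Submodule.Quotient.norm_mk_lt z hε
  refine ⟨x, fun g hg => ?_, by linarith⟩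
  have hker : W ≤ LinearMap.ker (g : X →ₗ[ℝ] ℝ) := fun y hy =>
    congrFun (LinearMap.mem_ker.1 hy) ⟨g, hg⟩
  set ξ : X ⧸ W →L[ℝ] ℝ := LinearMap.toContinuousLinearMap (W.liftQ g hker)
  have hξ : ξ.comp W.mkQL = g := by ext; rfl
  calc g x = ξ z := by rw [← hxz]; rfl
    _ = x'' g := by rw [hz, hξ]

lemma exists_tendsto_ultrafilter_of_norm_le {ι : Type*} (U : Ultrafilter ι)
    (f : ι → X →L[ℝ] ℝ) {K : ℝ} (hf : ∀ i, ‖f i‖ ≤ K) :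
    ∃ g : X →L[ℝ] ℝ, ∀ x, Tendsto (fun i => f i x) U (𝓝 (g x)) := by
  obtain ⟨g, -, hg⟩ := (WeakDual.isCompact_closedBall (0 : X →L[ℝ] ℝ) K).ultrafilter_le_nhds
    (U.map fun i => StrongDual.toWeakDual (f i))
    (le_principal_iff.2 <| mem_map.2 <| univ_mem' fun i => by simpa using hf i)
  exact ⟨WeakDual.toStrongDual g, fun x => ((WeakDual.eval_continuous x).tendsto g).comp hg⟩

lemma exists_seq_apply_eq_ite (S : X →L[ℝ] X) {a'' x'' : (X →L[ℝ] ℝ) →L[ℝ] ℝ}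
    (ha : ∀ w, a'' w = x'' (w.comp S)) {Φ : ((X →L[ℝ] ℝ) →L[ℝ] ℝ) →L[ℝ] ℝ}
    (hΦ : ∀ x, Φ (incl x) = 0) :
    ∃ (f : ℕ → X →L[ℝ] ℝ) (b : ℕ → X) (K K' : ℝ), (∀ n, ‖f n‖ ≤ K) ∧ (∀ m, ‖b m‖ ≤ K') ∧
      ∀ n m, f n (S (b m)) = if n ≤ m then Φ a'' else 0 := by
  -- The bound `‖Φ‖ + 1` is not written out: instance search does not find the norm on `X***`.
  obtain ⟨K, hK⟩ : ∃ K : ℝ, ∀ s : Set ((X →L[ℝ] ℝ) →L[ℝ] ℝ), s.Finite →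
      ∃ f : X →L[ℝ] ℝ, (∀ g ∈ s, g f = Φ g) ∧ ‖f‖ ≤ K :=
    ⟨_, fun _ hs => exists_forall_apply_eq_and_norm_le Φ hs one_pos⟩
  obtain ⟨q, hq, hqq⟩ := exists_seq_of_forall_finset_exists
    (fun q : (X →L[ℝ] ℝ) × X =>
      a'' q.1 = Φ a'' ∧ q.1 (S q.2) = Φ a'' ∧ ‖q.1‖ ≤ K ∧ ‖q.2‖ ≤ ‖x''‖ + 1)
    (fun q q' => q'.1 (S q.2) = 0 ∧ q.1 (S q'.2) = Φ a'') fun s hs => by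
      obtain ⟨f, hf, hf_norm⟩ := hK _ ((s.finite_toSet.image fun q => incl (S q.2)).insert a'')
      obtain ⟨b, hb, hb_norm⟩ := exists_forall_apply_eq_and_norm_le x''
        ((s.finite_toSet.image fun q => q.1.comp S).insert (f.comp S)) one_pos
      have hfa : a'' f = Φ a'' := hf a'' (Set.mem_insert _ _)
      have hfb : f (S b) = Φ a'' := (hb _ (Set.mem_insert _ _)).trans ((ha f).symm.trans hfa)
      refine ⟨(f, b), ⟨hfa, hfb, hf_norm, hb_norm⟩, fun q hq => ⟨?_, ?_⟩⟩
      · exact (hf _ (Set.mem_insert_of_mem _ ⟨q, hq, rfl⟩)).trans (hΦ _)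
      · exact (hb _ (Set.mem_insert_of_mem _ ⟨q, hq, rfl⟩)).trans
          ((ha q.1).symm.trans (hs q hq).1)
  refine ⟨fun n => (q n).1, fun n => (q n).2, K, ‖x''‖ + 1, fun n => (hq n).2.2.1,
    fun n => (hq n).2.2.2, fun n m => ?_⟩
  rcases lt_trichotomy n m with h | rfl | h
  · simp [h.le, (hqq n m h).2]
  · simp [(hq n).2.1]
  · simp [not_le.2 h, (hqq m n h).1]

/-- `a₀ ∈ A` has the Rw*w-property iff `HasRwswProperty (ContinuousLinearMap.mul ℝ A a₀)`,
since `a' a₀ = a' ∘ (a₀ * ·)`. -/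
def HasRwswProperty (S : X →L[ℝ] X) : Prop :=
  ∀ {ι : Type} (l : Filter ι), l.NeBot → ∀ a' : ι → (X →L[ℝ] ℝ),
    (∀ a : X, Tendsto (fun i => ((a' i).comp S) a) l (𝓝 0)) →
    ∀ F : (X →L[ℝ] ℝ) →L[ℝ] ℝ, Tendsto (fun i => F ((a' i).comp S)) l (𝓝 0)

lemma HasRwswProperty.eq_zero_of_apply_eq_ite {S : X →L[ℝ] X} (hS : HasRwswProperty S)
    {f : ℕ → X →L[ℝ] ℝ} {b : ℕ → X} {K K' c : ℝ} (hf : ∀ n, ‖f n‖ ≤ K) (hb : ∀ m, ‖b m‖ ≤ K')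
    (hfb : ∀ n m, f n (S (b m)) = if n ≤ m then c else 0) : c = 0 := by
  set U := hyperfilter ℕ
  have hU : (U : Filter ℕ) ≤ atTop := hyperfilter_le_cofinite.trans Nat.cofinite_eq_atTop.le
  obtain ⟨g, hg⟩ := exists_tendsto_ultrafilter_of_norm_le U f hf
  obtain ⟨F, hF⟩ := exists_tendsto_ultrafilter_of_norm_le U (fun m => incl (b m))
    (K := K') fun m => (NormedSpace.double_dual_bound ℝ X (b m)).trans (hb m)
  have hg_zero : ∀ m, g (S (b m)) = 0 := fun m =>
    tendsto_nhds_unique (hg _) <| tendsto_const_nhds.congr' <|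
      Eventually.mono (hU (eventually_gt_atTop m)) fun n hn => by simp [hfb, not_le.2 hn]
  have hF_eq : ∀ n, F ((f n - g).comp S) = c := fun n =>
    tendsto_nhds_unique (hF _) <| tendsto_const_nhds.congr' <|
      Eventually.mono (hU (eventually_ge_atTop n)) fun m hm => by
        simp [incl, hfb, hm, hg_zero]
  have hF_null : Tendsto (fun n => F ((f n - g).comp S)) U (𝓝 0) :=
    hS U inferInstance (fun n => f n - g) (fun a => by
      simpa using (hg (S a)).sub_const (g (S a))) F
  simp only [hF_eq] at hF_null
  exact tendsto_nhds_unique tendsto_const_nhds hF_null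

theorem HasRwswProperty.exists_eq_incl [CompleteSpace X] {S : X →L[ℝ] X}
    (hS : HasRwswProperty S) {a'' x'' : (X →L[ℝ] ℝ) →L[ℝ] ℝ}
    (ha : ∀ w, a'' w = x'' (w.comp S)) : ∃ c : X, a'' = incl c := by
  set p := LinearMap.range (NormedSpace.inclusionInDoubleDual ℝ X).toLinearMap
  have : IsClosed (p : Set ((X →L[ℝ] ℝ) →L[ℝ] ℝ)) := by
    have hJ : Isometry (NormedSpace.inclusionInDoubleDual ℝ X) :=
      (NormedSpace.inclusionInDoubleDualLi ℝ).isometry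
    rw [LinearMap.coe_range]
    exact hJ.isClosedEmbedding.isClosed_range
  by_contra h
  obtain ⟨Φ, hΦ, hΦa⟩ := exists_dual_eq_zero_of_notMem (p := p) (x := a'') fun ha'' => by
    obtain ⟨c, hc⟩ := LinearMap.mem_range.1 ha''
    exact h ⟨c, hc.symm⟩
  obtain ⟨f, b, K, K', hf, hb, hfb⟩ := exists_seq_apply_eq_ite S ha fun x => hΦ _ ⟨x, rfl⟩
  exact hΦa (hS.eq_zero_of_apply_eq_ite hf hb hfb)

end Duality

theorem center_eq_of_factor_and_Rwsw_general {A B : Type*}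
    [NonUnitalNormedRing A] [NormedSpace ℝ A] [IsScalarTower ℝ A A] [SMulCommClass ℝ A A]
    [CompleteSpace A] [NormedAddCommGroup B] [NormedSpace ℝ B]
    (πl : A →L[ℝ] B →L[ℝ] B)
    (a₀ : A)
    (hfac : ∀ a'' : (A →L[ℝ] ℝ) →L[ℝ] ℝ, ∃ x'' : (A →L[ℝ] ℝ) →L[ℝ] ℝ,
      a'' = arens (ContinuousLinearMap.mul ℝ A) (incl a₀) x'')
    (hR : ∀ {ι : Type} (l : Filter ι), l.NeBot → ∀ a' : ι → (A →L[ℝ] ℝ),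
      (∀ a : A, Filter.Tendsto
        (fun i => ((a' i).comp (ContinuousLinearMap.mul ℝ A a₀)) a) l (nhds (0 : ℝ))) →
      ∀ F : (A →L[ℝ] ℝ) →L[ℝ] ℝ, Filter.Tendsto
        (fun i => F ((a' i).comp (ContinuousLinearMap.mul ℝ A a₀))) l (nhds (0 : ℝ))) :
    ∀ a'' : (A →L[ℝ] ℝ) →L[ℝ] ℝ,
      WWCont (fun b'' : (B →L[ℝ] ℝ) →L[ℝ] ℝ => arens πl a'' b'') := by
  intro a''
  obtain ⟨x'', rfl⟩ := hfac a''
  obtain ⟨c, hc⟩ := HasRwswProperty.exists_eq_incl (S := ContinuousLinearMap.mul ℝ A a₀) hR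
    (arens_incl_apply_s9 _ a₀ x'')
  rw [hc]
  exact wwCont_arens_incl πl c

/-- if `A** = a₀A**` (first Arens product) for some `a₀ ∈ A` with the
Rw*w-property, then `Z_{B**}(A**) = A**`. -/
theorem center_eq_of_factor_and_Rwsw {A B : Type*}
    [NonUnitalNormedRing A] [NormedSpace ℝ A] [IsScalarTower ℝ A A] [SMulCommClass ℝ A A]
    [CompleteSpace A] [NormedAddCommGroup B] [NormedSpace ℝ B] [CompleteSpace B]
    (πl : A →L[ℝ] B →L[ℝ] B) (πr : B →L[ℝ] A →L[ℝ] B)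
    (hl : ∀ (a₁ a₂ : A) (b : B), πl (a₁ * a₂) b = πl a₁ (πl a₂ b))
    (hr : ∀ (b : B) (a₁ a₂ : A), πr b (a₁ * a₂) = πr (πr b a₁) a₂)
    (hc : ∀ (a₁ : A) (b : B) (a₂ : A), πr (πl a₁ b) a₂ = πl a₁ (πr b a₂))
    (a₀ : A)
    (hfac : ∀ a'' : (A →L[ℝ] ℝ) →L[ℝ] ℝ, ∃ x'' : (A →L[ℝ] ℝ) →L[ℝ] ℝ,
      a'' = arens (ContinuousLinearMap.mul ℝ A) (incl a₀) x'')
    (hR : ∀ {ι : Type} (l : Filter ι), l.NeBot → ∀ a' : ι → (A →L[ℝ] ℝ),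
      (∀ a : A, Filter.Tendsto
        (fun i => ((a' i).comp (ContinuousLinearMap.mul ℝ A a₀)) a) l (nhds (0 : ℝ))) →
      ∀ F : (A →L[ℝ] ℝ) →L[ℝ] ℝ, Filter.Tendsto
        (fun i => F ((a' i).comp (ContinuousLinearMap.mul ℝ A a₀))) l (nhds (0 : ℝ))) :
    ∀ a'' : (A →L[ℝ] ℝ) →L[ℝ] ℝ,
      WWCont (fun b'' : (B →L[ℝ] ℝ) →L[ℝ] ℝ => arens πl a'' b'') :=
  center_eq_of_factor_and_Rwsw_general πl a₀ hfac hR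
end

section
/- Let B be a Banach A-bimodule such that for all bounded nets (b_α) ⊆ B and (b'_β) ⊆ B*, the iterated limits lim_α lim_β ⟨b'_β, b_α⟩ and lim_β lim_α ⟨b'_β, b_α⟩ agree whenever both exist. Then A has both the Lw*w-property and the Rw*w-property with respect to B. -/
open Filter Topology

section Aux


/-! Grothendieck's double-limit criterion makes `B` reflexive. If `F ∈ B**` were not an
evaluation, Hahn–Banach would give `Φ ∈ B***` vanishing on `B` with `Φ F ≠ 0`. Applying
Goldstine's theorem alternately to `F` and to `Φ` (only finitely many functionals matter at each
step) yields bounded sequences `bᵢ ∈ B`, `b'ⱼ ∈ B*` with `lim_i lim_j b'ⱼ bᵢ = 0` but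
`lim_j lim_i b'ⱼ bᵢ = lim_j F b'ⱼ = Φ F`. In a reflexive space weak* and weak convergence in
`B*` coincide, which gives both properties at once. -/

def IteratedLimitsAgree (B : Type*) [NormedAddCommGroup B] [NormedSpace ℝ B] : Prop :=
  ∀ {ι κ : Type} (lι : Filter ι) (lκ : Filter κ), lι.NeBot → lκ.NeBot →
      ∀ (b : ι → B) (b' : κ → (B →L[ℝ] ℝ)),
        (∃ C : ℝ, ∀ i, ‖b i‖ ≤ C) → (∃ C : ℝ, ∀ j, ‖b' j‖ ≤ C) →
        ∀ (g : ι → ℝ) (h : κ → ℝ) (L₁ L₂ : ℝ),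
          (∀ i, Filter.Tendsto (fun j => b' j (b i)) lκ (nhds (g i))) →
          Filter.Tendsto g lι (nhds L₁) →
          (∀ j, Filter.Tendsto (fun i => b' j (b i)) lι (nhds (h j))) →
          Filter.Tendsto h lκ (nhds L₂) → L₁ = L₂

lemma Submodule.exists_dual_forall_apply_eq_zero_ne_zero {E : Type*} [NormedAddCommGroup E]
    [NormedSpace ℝ E] (p : Submodule ℝ E) [IsClosed (p : Set E)] {x : E} (hx : x ∉ p) :
    ∃ f : StrongDual ℝ E, (∀ y ∈ p, f y = 0) ∧ f x ≠ 0 := by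
  obtain ⟨g, hg⟩ := SeparatingDual.exists_ne_zero (R := ℝ) (x := p.mkQL x)
    (by simpa [Submodule.Quotient.mk_eq_zero] using hx)
  refine ⟨g.comp p.mkQL, fun y hy => ?_, hg⟩
  simp [(Submodule.Quotient.mk_eq_zero p).2 hy]

section Goldstine

variable {X : Type*} [NormedAddCommGroup X] [NormedSpace ℝ X]

lemma mul_norm_le_of_forall_mem_closedBall_abs_le {C u : ℝ} (hC : 0 ≤ C) (ψ : StrongDual ℝ X)
    (h : ∀ x ∈ Metric.closedBall (0 : X) C, |ψ x| ≤ u) : C * ‖ψ‖ ≤ u := by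
  rcases hC.eq_or_lt with rfl | hC
  · simpa using h 0 (by simp)
  · exact (le_div_iff₀' hC).1 (ψ.opNorm_bound_of_ball_bound hC u h)

lemma bidual_apply_comp_pi {ι : Type*} [Fintype ι] (F : StrongDual ℝ (StrongDual ℝ X))
    (φ : ι → StrongDual ℝ X) (f : StrongDual ℝ (ι → ℝ)) :
    F (f.comp (ContinuousLinearMap.pi φ)) = f (fun k => F (φ k)) := by
  classical
  set c : ι → ℝ := fun k => f fun j => if k = j then 1 else 0
  have hf : ∀ y, f y = ∑ k, y k * c k := fun y => by
    simpa using (f : (ι → ℝ) →ₗ[ℝ] ℝ).pi_apply_eq_sum_univ y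
  have hcomp : f.comp (ContinuousLinearMap.pi φ) = ∑ k, c k • φ k := by
    ext x
    simp [hf, mul_comm]
  simp [hcomp, hf, mul_comm]

lemma apply_mem_closure_image_closedBall (F : StrongDual ℝ (StrongDual ℝ X)) {C : ℝ}
    (hF : ‖F‖ ≤ C) {ι : Type*} [Fintype ι] (φ : ι → StrongDual ℝ X) :
    (fun k => F (φ k)) ∈ closure (ContinuousLinearMap.pi φ '' Metric.closedBall 0 C) := by
  set T := ContinuousLinearMap.pi φ
  by_contra hF_notMem
  obtain ⟨f, u, hfu, huF⟩ := geometric_hahn_banach_closed_point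
    ((convex_closedBall (0 : X) C).linear_image (T : X →ₗ[ℝ] (ι → ℝ))).closure isClosed_closure
    hF_notMem
  have hlt : ∀ x ∈ Metric.closedBall (0 : X) C, f.comp T x < u :=
    fun x hx => hfu _ (subset_closure (Set.mem_image_of_mem T hx))
  have habs : ∀ x ∈ Metric.closedBall (0 : X) C, |f.comp T x| ≤ u := fun x hx => by
    have hneg := hlt (-x) (by simpa using hx)
    rw [map_neg] at hneg
    exact abs_le.2 ⟨by linarith, (hlt x hx).le⟩
  have : f (fun k => F (φ k)) ≤ u :=
    calc f (fun k => F (φ k)) = F (f.comp T) := (bidual_apply_comp_pi F φ f).symm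
      _ ≤ ‖F‖ * ‖f.comp T‖ := (le_abs_self _).trans (F.le_opNorm _)
      _ ≤ C * ‖f.comp T‖ := by gcongr
      _ ≤ u := mul_norm_le_of_forall_mem_closedBall_abs_le ((norm_nonneg F).trans hF) _ habs
  linarith

lemma exists_norm_le_forall_abs_apply_sub_lt (F : StrongDual ℝ (StrongDual ℝ X)) {C : ℝ}
    (hC : 0 ≤ C) (hF : ∀ φ, ‖F φ‖ ≤ C * ‖φ‖) (S : Finset (StrongDual ℝ X)) {ε : ℝ}
    (hε : 0 < ε) :
    ∃ x : X, ‖x‖ ≤ C ∧ ∀ φ ∈ S, |φ x - F φ| < ε := by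
  obtain ⟨_, ⟨x, hx, rfl⟩, hdist⟩ := Metric.mem_closure_iff.1
    (apply_mem_closure_image_closedBall F (F.opNorm_le_bound hC hF)
      (fun φ : S => (φ : StrongDual ℝ X))) ε hε
  refine ⟨x, mem_closedBall_zero_iff.1 hx, fun φ hφ => ?_⟩
  have := (dist_le_pi_dist _ _ ⟨φ, hφ⟩).trans_lt hdist
  rwa [Real.dist_eq, abs_sub_comm] at this

end Goldstine

section IteratedLimits

variable {B : Type*} [NormedAddCommGroup B] [NormedSpace ℝ B]

lemma exists_approx_bidual_and_tridual (F : StrongDual ℝ (StrongDual ℝ B))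
    (Φ : StrongDual ℝ (StrongDual ℝ (StrongDual ℝ B))) {D : ℝ} (hD : 0 ≤ D)
    (hΦ : ∀ G, ‖Φ G‖ ≤ D * ‖G‖) (s : Finset (B × StrongDual ℝ B)) {ε : ℝ} (hε : 0 < ε) :
    ∃ (b : B) (b' : StrongDual ℝ B), ‖b‖ ≤ ‖F‖ ∧ ‖b'‖ ≤ D ∧ |F b' - Φ F| < ε ∧
      ∀ x ∈ s, |b' x.1 - Φ (incl x.1)| < ε ∧ |x.2 b - F x.2| < ε := by
  classical
  obtain ⟨b', hb'_norm, hb'⟩ := exists_norm_le_forall_abs_apply_sub_lt Φ hD hΦ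
    (insert F (s.image fun x => incl x.1)) hε
  obtain ⟨b, hb_norm, hb⟩ := exists_norm_le_forall_abs_apply_sub_lt F (norm_nonneg F)
    F.le_opNorm (s.image Prod.snd) hε
  refine ⟨b, b', hb_norm, hb'_norm, hb' F (Finset.mem_insert_self _ _), fun x hx => ⟨?_, ?_⟩⟩
  · exact hb' _ (Finset.mem_insert_of_mem (Finset.mem_image_of_mem _ hx))
  · exact hb _ (Finset.mem_image_of_mem _ hx)

lemma exists_seq_iterated_limits (F : StrongDual ℝ (StrongDual ℝ B))
    (Φ : StrongDual ℝ (StrongDual ℝ (StrongDual ℝ B))) {D : ℝ} (hD : 0 ≤ D)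
    (hΦD : ∀ G, ‖Φ G‖ ≤ D * ‖G‖) (hΦ : ∀ x : B, Φ (incl x) = 0) :
    ∃ (b : ℕ → B) (b' : ℕ → StrongDual ℝ B), (∃ C, ∀ i, ‖b i‖ ≤ C) ∧ (∃ C, ∀ j, ‖b' j‖ ≤ C) ∧
      (∀ i, Tendsto (fun j => b' j (b i)) atTop (𝓝 0)) ∧
      (∀ j, Tendsto (fun i => b' j (b i)) atTop (𝓝 (F (b' j)))) ∧
      Tendsto (fun j => F (b' j)) atTop (𝓝 (Φ F)) := by
  classical
  -- The first component counts steps, so that the tolerances `1 / (k + 1)` shrink.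
  obtain ⟨f, hP, hr⟩ := exists_seq_of_forall_finset_exists
    (fun y : ℕ × B × StrongDual ℝ B => ‖y.2.1‖ ≤ ‖F‖ ∧ ‖y.2.2‖ ≤ D ∧
      |F y.2.2 - Φ F| < 1 / (y.1 + 1))
    (fun x y => x.1 < y.1 ∧ |y.2.2 x.2.1| < 1 / (y.1 + 1) ∧
      |x.2.2 y.2.1 - F x.2.2| < 1 / (y.1 + 1))
    (fun s _ => by
      set n := s.sup Prod.fst + 1
      obtain ⟨b, b', hb, hb', hF, hs⟩ := exists_approx_bidual_and_tridual F Φ hD hΦD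
        (s.image Prod.snd) (Nat.one_div_pos_of_nat (n := n))
      refine ⟨(n, b, b'), ⟨hb, hb', hF⟩, fun x hx => ⟨Nat.lt_succ_of_le (s.le_sup hx), ?_⟩⟩
      simpa [hΦ] using hs x.2 (Finset.mem_image_of_mem _ hx))
  have hmono : StrictMono fun n => (f n).1 :=
    strictMono_nat_of_lt_succ fun n => (hr _ _ n.lt_succ_self).1
  have htol : Tendsto (fun n => 1 / ((f n).1 + 1 : ℝ)) atTop (𝓝 0) := by
    refine squeeze_zero (fun _ => by positivity) (fun n => ?_)
      tendsto_one_div_add_atTop_nhds_zero_nat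
    gcongr
    exact_mod_cast hmono.id_le n
  have hlim : ∀ {u : ℕ → ℝ} {a : ℝ}, (∀ᶠ n in atTop, |u n - a| ≤ 1 / ((f n).1 + 1 : ℝ)) →
      Tendsto u atTop (𝓝 a) := fun h =>
    tendsto_iff_norm_sub_tendsto_zero.2 (squeeze_zero' (.of_forall fun _ => norm_nonneg _) h htol)
  refine ⟨fun n => (f n).2.1, fun n => (f n).2.2, ⟨_, fun n => (hP n).1⟩,
    ⟨_, fun n => (hP n).2.1⟩, fun i => hlim ?_, fun j => hlim ?_,
    hlim (.of_forall fun j => (hP j).2.2.le)⟩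
  · filter_upwards [eventually_gt_atTop i] with j hj
    simpa using (hr i j hj).2.1.le
  · filter_upwards [eventually_gt_atTop j] with i hi
    exact (hr j i hi).2.2.le

theorem IteratedLimitsAgree.surjective_incl [CompleteSpace B] (hB : IteratedLimitsAgree B) :
    Function.Surjective (incl : B → StrongDual ℝ (StrongDual ℝ B)) := by
  intro F
  by_contra! hF
  let p := LinearMap.range (NormedSpace.inclusionInDoubleDual ℝ B).toLinearMap
  have : IsClosed (p : Set (StrongDual ℝ (StrongDual ℝ B))) := by
    rw [LinearMap.coe_range]
    have hiso : Isometry (incl : B → StrongDual ℝ (StrongDual ℝ B)) :=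
      (NormedSpace.inclusionInDoubleDualLi ℝ).isometry
    exact hiso.isClosedEmbedding.isClosed_range
  obtain ⟨Φ, hΦ, hΦF⟩ := p.exists_dual_forall_apply_eq_zero_ne_zero (x := F)
    (by rintro ⟨x, rfl⟩; exact hF x rfl)
  obtain ⟨D, hD, hΦD⟩ := Φ.bound
  obtain ⟨b, b', hb, hb', hlim₁, hlim₂, hlim₃⟩ :=
    exists_seq_iterated_limits F Φ hD.le hΦD fun x => hΦ _ ⟨x, rfl⟩
  exact hΦF (hB atTop atTop inferInstance inferInstance b b' hb hb' _ _ 0 (Φ F) hlim₁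
    tendsto_const_nhds hlim₂ hlim₃).symm

lemma tendsto_bidual_apply_of_surjective_incl
    (hB : Function.Surjective (incl : B → StrongDual ℝ (StrongDual ℝ B))) {ι : Type*}
    {l : Filter ι} {f : ι → StrongDual ℝ B} {φ : StrongDual ℝ B}
    (hf : ∀ b, Tendsto (fun i => f i b) l (𝓝 (φ b))) (F : StrongDual ℝ (StrongDual ℝ B)) :
    Tendsto (fun i => F (f i)) l (𝓝 (F φ)) := by
  obtain ⟨x, rfl⟩ := hB F
  exact hf x

end IteratedLimits

theorem LRwsw_of_iterated_limits_general {A B : Type*}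
    [NonUnitalNormedRing A] [NormedSpace ℝ A]
    [NormedAddCommGroup B] [NormedSpace ℝ B] [CompleteSpace B]
    (πl : A →L[ℝ] B →L[ℝ] B) (πr : B →L[ℝ] A →L[ℝ] B)
    (hiter : ∀ {ι κ : Type} (lι : Filter ι) (lκ : Filter κ), lι.NeBot → lκ.NeBot →
      ∀ (b : ι → B) (b' : κ → (B →L[ℝ] ℝ)),
        (∃ C : ℝ, ∀ i, ‖b i‖ ≤ C) → (∃ C : ℝ, ∀ j, ‖b' j‖ ≤ C) →
        ∀ (g : ι → ℝ) (h : κ → ℝ) (L₁ L₂ : ℝ),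
          (∀ i, Filter.Tendsto (fun j => b' j (b i)) lκ (nhds (g i))) →
          Filter.Tendsto g lι (nhds L₁) →
          (∀ j, Filter.Tendsto (fun i => b' j (b i)) lι (nhds (h j))) →
          Filter.Tendsto h lκ (nhds L₂) → L₁ = L₂) :
    (∀ (a : A) {ι : Type} (l : Filter ι), l.NeBot → ∀ b' : ι → (B →L[ℝ] ℝ),
      (∀ b : B, Filter.Tendsto
        (fun i => ((b' i).comp (πr.flip a)) b) l (nhds (0 : ℝ))) →
      ∀ F : (B →L[ℝ] ℝ) →L[ℝ] ℝ, Filter.Tendsto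
        (fun i => F ((b' i).comp (πr.flip a))) l (nhds (0 : ℝ))) ∧
    (∀ (a : A) {ι : Type} (l : Filter ι), l.NeBot → ∀ b' : ι → (B →L[ℝ] ℝ),
      (∀ b : B, Filter.Tendsto
        (fun i => ((b' i).comp (πl a)) b) l (nhds (0 : ℝ))) →
      ∀ F : (B →L[ℝ] ℝ) →L[ℝ] ℝ, Filter.Tendsto
        (fun i => F ((b' i).comp (πl a))) l (nhds (0 : ℝ))) := by
  have hB := IteratedLimitsAgree.surjective_incl (B := B) @hiter
  refine ⟨fun a ι l _ b' hb' F => ?_, fun a ι l _ b' hb' F => ?_⟩ <;>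
    simpa using tendsto_bidual_apply_of_surjective_incl hB (φ := 0) (by simpa using hb') F

/-- if iterated limits over bounded nets in `B` and `B*` always agree
(whenever both exist), then `A` has both the Lw*w- and Rw*w-property with respect
to `B`. -/
theorem LRwsw_of_iterated_limits {A B : Type*}
    [NonUnitalNormedRing A] [NormedSpace ℝ A] [IsScalarTower ℝ A A] [SMulCommClass ℝ A A]
    [CompleteSpace A] [NormedAddCommGroup B] [NormedSpace ℝ B] [CompleteSpace B]
    (πl : A →L[ℝ] B →L[ℝ] B) (πr : B →L[ℝ] A →L[ℝ] B)
    (hl : ∀ (a₁ a₂ : A) (b : B), πl (a₁ * a₂) b = πl a₁ (πl a₂ b))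
    (hr : ∀ (b : B) (a₁ a₂ : A), πr b (a₁ * a₂) = πr (πr b a₁) a₂)
    (hc : ∀ (a₁ : A) (b : B) (a₂ : A), πr (πl a₁ b) a₂ = πl a₁ (πr b a₂))
    (hiter : ∀ {ι κ : Type} (lι : Filter ι) (lκ : Filter κ), lι.NeBot → lκ.NeBot →
      ∀ (b : ι → B) (b' : κ → (B →L[ℝ] ℝ)),
        (∃ C : ℝ, ∀ i, ‖b i‖ ≤ C) → (∃ C : ℝ, ∀ j, ‖b' j‖ ≤ C) →
        ∀ (g : ι → ℝ) (h : κ → ℝ) (L₁ L₂ : ℝ),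
          (∀ i, Filter.Tendsto (fun j => b' j (b i)) lκ (nhds (g i))) →
          Filter.Tendsto g lι (nhds L₁) →
          (∀ j, Filter.Tendsto (fun i => b' j (b i)) lι (nhds (h j))) →
          Filter.Tendsto h lκ (nhds L₂) → L₁ = L₂) :
    (∀ (a : A) {ι : Type} (l : Filter ι), l.NeBot → ∀ b' : ι → (B →L[ℝ] ℝ),
      (∀ b : B, Filter.Tendsto
        (fun i => ((b' i).comp (πr.flip a)) b) l (nhds (0 : ℝ))) →
      ∀ F : (B →L[ℝ] ℝ) →L[ℝ] ℝ, Filter.Tendsto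
        (fun i => F ((b' i).comp (πr.flip a))) l (nhds (0 : ℝ))) ∧
    (∀ (a : A) {ι : Type} (l : Filter ι), l.NeBot → ∀ b' : ι → (B →L[ℝ] ℝ),
      (∀ b : B, Filter.Tendsto
        (fun i => ((b' i).comp (πl a)) b) l (nhds (0 : ℝ))) →
      ∀ F : (B →L[ℝ] ℝ) →L[ℝ] ℝ, Filter.Tendsto
        (fun i => F ((b' i).comp (πl a))) l (nhds (0 : ℝ))) :=
  LRwsw_of_iterated_limits_general πl πr hiter
end Aux
end

section
/- Let B be a Banach A-bimodule with AB* ⊆ wap_ℓ(B). If B* strong factors on the left, then A has the Lw*w-property with respect to B. -/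
open Filter Topology

/-- if `AB* ⊆ wap_ℓ(B)` and `B*` strong factors on the left, then `A`
has the Lw*w-property with respect to `B`. -/
theorem Lwsw_of_strong_factor {A B : Type*}
    [NonUnitalNormedRing A] [NormedSpace ℝ A] [IsScalarTower ℝ A A] [SMulCommClass ℝ A A]
    [CompleteSpace A] [NormedAddCommGroup B] [NormedSpace ℝ B] [CompleteSpace B]
    (πl : A →L[ℝ] B →L[ℝ] B) (πr : B →L[ℝ] A →L[ℝ] B)
    (hl : ∀ (a₁ a₂ : A) (b : B), πl (a₁ * a₂) b = πl a₁ (πl a₂ b))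
    (hr : ∀ (b : B) (a₁ a₂ : A), πr b (a₁ * a₂) = πr (πr b a₁) a₂)
    (hc : ∀ (a₁ : A) (b : B) (a₂ : A), πr (πl a₁ b) a₂ = πl a₁ (πr b a₂))
    (hwap : ∀ (a : A) (b' : B →L[ℝ] ℝ)
      (a'' : (A →L[ℝ] ℝ) →L[ℝ] ℝ) (b'' : (B →L[ℝ] ℝ) →L[ℝ] ℝ),
        arens πl a'' b'' (b'.comp (πr.flip a)) =
          arens πl.flip b'' a'' (b'.comp (πr.flip a)))
    (hsf : ∀ {ι : Type} (l : Filter ι), l.NeBot → ∀ b' : ι → (B →L[ℝ] ℝ),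
      ∃ (aa : ι → A) (g : B →L[ℝ] ℝ) (a'' : (A →L[ℝ] ℝ) →L[ℝ] ℝ),
        (∀ i, b' i = g.comp (πl (aa i))) ∧
        ∀ φ : A →L[ℝ] ℝ, Filter.Tendsto (fun i => φ (aa i)) l (nhds (a'' φ))) :
    ∀ (a : A) {ι : Type} (l : Filter ι), l.NeBot → ∀ b' : ι → (B →L[ℝ] ℝ),
      (∀ b : B, Filter.Tendsto
        (fun i => ((b' i).comp (πr.flip a)) b) l (nhds (0 : ℝ))) →
      ∀ F : (B →L[ℝ] ℝ) →L[ℝ] ℝ, Filter.Tendsto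
        (fun i => F ((b' i).comp (πr.flip a))) l (nhds (0 : ℝ)) := by
  intro a ι l hne b' hw F
  obtain ⟨aa, g, a'', hfac, hconv⟩ := hsf l hne b'
  set ag : B →L[ℝ] ℝ := g.comp (πr.flip a) with hag
  have key : ∀ i, (b' i).comp (πr.flip a) = ag.comp (πl (aa i)) := by
    intro i
    ext b
    simp [hfac i, hag, hc]
  have harr : ∀ i, F ((b' i).comp (πr.flip a)) = (arensHalf πl F ag) (aa i) := by
    intro i
    rw [key i]
    rfl
  have hlim : Tendsto (fun i => F ((b' i).comp (πr.flip a))) l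
      (nhds (a'' (arensHalf πl F ag))) := by
    simp only [harr]; exact hconv _
  have h3 : arensHalf πl.flip a'' ag = 0 := by
    ext b
    have hψ : ∀ i, (ag.comp ((πl.flip) b)) (aa i) = ((b' i).comp (πr.flip a)) b := by
      intro i; simp [hag, hfac i, hc]
    have t1 := hconv (ag.comp ((πl.flip) b))
    have t2 : Tendsto (fun i => (ag.comp ((πl.flip) b)) (aa i)) l (nhds 0) := by
      simp only [hψ]; exact hw b
    have hz : a'' (ag.comp ((πl.flip) b)) = 0 := tendsto_nhds_unique t1 t2
    have hform : (arensHalf πl.flip a'' ag) b = a'' (ag.comp ((πl.flip) b)) := rfl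
    simp [hform, hz]
  have h1 : a'' (arensHalf πl F ag) = arens πl a'' F ag := rfl
  have h2 : arens πl.flip F a'' ag = F (arensHalf πl.flip a'' ag) := rfl
  have hzero : a'' (arensHalf πl F ag) = 0 := by
    rw [h1, hag, hwap a g a'' F, ← hag, h2, h3]
    simp
  rw [hzero] at hlim
  exact hlim
end
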